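/- For every r ≥ 1, the map c_3 : F_q → F_2^{q} sending a to (tr(a·(b+γ_0)^{-1}), ..., tr(a·(b+γ_{q/2−1})^{-1}), tr(a·(b+γ_0)^{-1}), ..., tr(a·(b+γ_{q/2−1})^{-1})) is an injective F_2-linear (additive) map, and its image is exactly the dual code C_3^⊥ = {w ∈ F_2^{q} : Σ_l w_l·u_l = 0 in F_2 for all u ∈ C_3}. In particular C_3^⊥ has exactly q elements. -/

import Mathlib

/-!
In characteristic 2 the trace is additive and takes values in `F_2`, so `a ↦ (tr(a·v_l))_l` is
additive and every such word is orthogonal to every `u` with `∑ u_l v_l = 0`, because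
`∑ tr(a v_l) u_l = tr(a ∑ u_l v_l) = 0`. The trace is the polynomial `∑_{i<r} X^(2^i)` of degree
`q/2`, so it has at most `q/2` zeros. If `a ≠ 0` had `tr(a/(b+γ_j)) = 0` for all `j`, then `0` and
the `q/2` distinct nonzero elements `a/(b+γ_j)` would be `q/2 + 1` zeros; hence `c_3` is injective
and its image has `q` elements. On the other hand `C_3` is the kernel of the `F_2`-linear map
`u ↦ ∑ u_l v_l` into `F_q`, so its dual is the image of the transpose `F_q^* → F_2^q` and has at
most `q` elements.
-/

open Finset

/-- The trace map `tr : F_q → F_2 ⊆ F_q`, `tr x = x + x² + ⋯ + x^(2^(r-1))`. -/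
def trF {F : Type*} [Field F] (r : ℕ) (x : F) : F :=
  ∑ i ∈ Finset.range r, x ^ (2 ^ i)

/-- The trace map with values in `F_2 = ZMod 2` (the value of `trF` is always `0` or `1`). -/
def tr2 {F : Type*} [Field F] [DecidableEq F] (r : ℕ) (x : F) : ZMod 2 :=
  if trF r x = 0 then 0 else 1

/-- The binary linear code `C = {u ∈ F_2^n : ∑_l u_l·v_l = 0 in F_q}`, where `u_l ∈ F_2`
acts on `F_q` through the inclusion `F_2 ⊆ F_q`. -/
def codeSet {F : Type*} [Field F] {n : ℕ} (v : Fin n → F) : Set (Fin n → ZMod 2) :=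
  {u | ∑ l, (u l).val • v l = 0}

/-- The dual code `C^⊥ = {w ∈ F_2^n : ∑_l w_l·u_l = 0 in F_2 for all u ∈ C}`. -/
def dualSet {F : Type*} [Field F] {n : ℕ} (v : Fin n → F) : Set (Fin n → ZMod 2) :=
  {w | ∀ u ∈ codeSet v, ∑ l, w l * u l = 0}

/-- The vector `(g_1⁻¹, …, g_m⁻¹, g_1⁻¹, …, g_m⁻¹) ∈ F_q^n`, where `n = m + m`. -/
def doubledInvVec {F : Type*} [Field F] {m n : ℕ} (g : Fin m → F) (hN : n = m + m) :
    Fin n → F :=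
  fun l => (Fin.append g g (Fin.cast hN l))⁻¹

/-- The codeword map `a ↦ (tr(a·v_1), …, tr(a·v_n)) ∈ F_2^n`. -/
def cw {F : Type*} [Field F] [DecidableEq F] (r : ℕ) {n : ℕ} (v : Fin n → F) (a : F) :
    Fin n → ZMod 2 :=
  fun l => tr2 r (a * v l)

open Polynomial

section Trace

variable {F : Type*} [Field F]

@[simp]
theorem trF_zero (r : ℕ) : trF r (0 : F) = 0 :=
  sum_eq_zero fun i _ => zero_pow (pow_ne_zero i two_ne_zero)

theorem tr2_eq_zero_iff [DecidableEq F] {r : ℕ} {x : F} : tr2 r x = 0 ↔ trF r x = 0 := by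
  unfold tr2
  split_ifs <;> simp_all

variable (F) in
noncomputable def trPoly (r : ℕ) : F[X] :=
  ∑ i ∈ range r, X ^ 2 ^ i

theorem eval_trPoly (r : ℕ) (x : F) : (trPoly F r).eval x = trF r x := by
  simp [trPoly, trF, eval_finsetSum]

theorem degree_trPoly_lt (r : ℕ) : (trPoly F r).degree < (2 ^ r : ℕ) :=
  (degree_sum_le _ _).trans_lt <| (Finset.sup_lt_iff (WithBot.bot_lt_coe _)).2 fun i hi => by
    rw [degree_X_pow]
    exact_mod_cast Nat.pow_lt_pow_right one_lt_two (mem_range.1 hi)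

theorem card_le_of_forall_trF_eq_zero {r : ℕ} (hr : 1 ≤ r) {Z : Finset F}
    (hZ : ∀ x ∈ Z, trF r x = 0) : #Z ≤ 2 ^ (r - 1) := by
  obtain ⟨s, rfl⟩ := Nat.exists_eq_add_of_le' hr
  have hP : trPoly F (s + 1) = X ^ 2 ^ s + trPoly F s := by
    rw [trPoly, sum_range_succ, add_comm, trPoly]
  have hmonic : (trPoly F (s + 1)).Monic := hP ▸ monic_X_pow_add (degree_trPoly_lt s)
  calc #Z ≤ (trPoly F (s + 1)).natDegree :=
        card_le_degree_of_subset_roots fun x hx =>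
          (mem_roots hmonic.ne_zero).2 <| by rw [IsRoot, eval_trPoly]; exact hZ x hx
    _ = 2 ^ s := by
        rw [hP, natDegree_add_eq_left_of_degree_lt (by rw [degree_X_pow]; exact degree_trPoly_lt s),
          natDegree_X_pow]

theorem eq_zero_of_forall_trF_mul_inv_eq_zero {r : ℕ} (hr : 1 ≤ r) {ι : Type*} [Fintype ι]
    {g : ι → F} (hg : Function.Injective g) (hg0 : ∀ i, g i ≠ 0)
    (hcard : 2 ^ (r - 1) ≤ Fintype.card ι) {a : F} (ha : ∀ i, trF r (a * (g i)⁻¹) = 0) :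
    a = 0 := by
  classical
  by_contra ha0
  have hinj : Function.Injective fun i => a * (g i)⁻¹ :=
    fun i j h => hg (inv_injective (mul_left_cancel₀ ha0 h))
  have h0 : (0 : F) ∉ univ.image fun i => a * (g i)⁻¹ := by
    simp [ha0, hg0]
  have hZ : ∀ x ∈ insert 0 (univ.image fun i => a * (g i)⁻¹), trF r x = 0 := by
    simpa using ha
  have := card_le_of_forall_trF_eq_zero hr hZ
  rw [card_insert_of_notMem h0, card_image_of_injective _ hinj, card_univ] at this
  omega

variable [CharP F 2]

theorem trF_add (r : ℕ) (x y : F) : trF r (x + y) = trF r x + trF r y := by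
  rw [trF, trF, trF, ← sum_add_distrib]
  exact sum_congr rfl fun i _ => add_pow_char_pow x y 2 i

def trFAddHom (r : ℕ) : F →+ F :=
  AddMonoidHom.mk' (trF r) (trF_add r)

@[simp]
theorem trFAddHom_apply (r : ℕ) (x : F) : trFAddHom r x = trF r x :=
  rfl

theorem trF_sq [Fintype F] {r : ℕ} (hF : Fintype.card F = 2 ^ r) (x : F) :
    trF r x ^ 2 = trF r x := by
  have hfrob : trF r x ^ 2 = ∑ i ∈ range r, x ^ 2 ^ (i + 1) := by
    rw [trF, sum_pow_char]
    exact sum_congr rfl fun i _ => by rw [← pow_mul, pow_succ]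
  have hshift := (sum_range_succ' (fun i => x ^ 2 ^ i) r).symm.trans (sum_range_succ _ r)
  rw [← hF, FiniteField.pow_card, pow_zero, pow_one] at hshift
  rw [hfrob, trF]
  exact add_right_cancel hshift

theorem cast_tr2 [Fintype F] [DecidableEq F] {r : ℕ} (hF : Fintype.card F = 2 ^ r) (x : F) :
    ZMod.castHom (dvd_refl 2) F (tr2 r x) = trF r x := by
  rcases IsIdempotentElem.iff_eq_zero_or_one.1 (pow_two (trF r x) ▸ trF_sq hF x) with h | h <;>
    simp [tr2, h]

theorem tr2_add [Fintype F] [DecidableEq F] {r : ℕ} (hF : Fintype.card F = 2 ^ r) (x y : F) :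
    tr2 r (x + y) = tr2 r x + tr2 r y := by
  apply (ZMod.castHom (dvd_refl 2) F).injective
  rw [map_add, cast_tr2 hF, cast_tr2 hF, cast_tr2 hF, trF_add]

end Trace

section Code

variable {F : Type*} [Field F] [CharP F 2] {n : ℕ}

theorem cw_add [Fintype F] [DecidableEq F] {r : ℕ} (hF : Fintype.card F = 2 ^ r)
    (v : Fin n → F) (a a' : F) : cw r v (a + a') = cw r v a + cw r v a' :=
  funext fun l => by simp only [cw, add_mul, tr2_add hF, Pi.add_apply]

theorem cw_injective [Fintype F] [DecidableEq F] {r : ℕ} (hF : Fintype.card F = 2 ^ r)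
    {v : Fin n → F} (hv : ∀ a, (∀ l, trF r (a * v l) = 0) → a = 0) :
    Function.Injective (cw r v) := by
  intro a a' h
  refine CharTwo.add_eq_zero.1 (hv _ fun l => tr2_eq_zero_iff.1 ?_)
  rw [← cw, cw_add hF, h, Pi.add_apply, CharTwo.add_self_eq_zero]

theorem range_cw_subset_dualSet [Fintype F] [DecidableEq F] {r : ℕ}
    (hF : Fintype.card F = 2 ^ r) (v : Fin n → F) : Set.range (cw r v) ⊆ dualSet v := by
  rintro _ ⟨a, rfl⟩ u (hu : ∑ l, (u l).val • v l = 0)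
  apply (ZMod.castHom (dvd_refl 2) F).injective
  calc ZMod.castHom (dvd_refl 2) F (∑ l, cw r v a l * u l)
      = ∑ l, trFAddHom r ((u l).val • (a * v l)) := by
        refine (map_sum _ _ _).trans (sum_congr rfl fun l _ => ?_)
        rw [map_mul, cw, cast_tr2 hF, map_nsmul, nsmul_eq_mul, ZMod.castHom_apply,
          ZMod.cast_eq_val, mul_comm, trFAddHom_apply]
    _ = trF r (a * ∑ l, (u l).val • v l) := by
        rw [mul_sum, ← trFAddHom_apply, map_sum]
        simp only [mul_smul_comm]
    _ = ZMod.castHom (dvd_refl 2) F 0 := by rw [hu, mul_zero, trF_zero, map_zero]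

theorem card_dualSet_le [Finite F] (v : Fin n → F) : Nat.card (dualSet v) ≤ Nat.card F := by
  let _ := ZMod.algebra F 2
  let Φ := Fintype.linearCombination (ZMod 2) v
  have hcode : codeSet v = LinearMap.ker Φ := by
    ext u
    simp [codeSet, Φ, Fintype.linearCombination_apply, ← Nat.cast_smul_eq_nsmul (ZMod 2)]
  -- the dual of a kernel is the image of the transpose
  have hdual (w) :
      w ∈ dualSet v ↔ dotProductEquiv (ZMod 2) (Fin n) w ∈ LinearMap.range Φ.dualMap := by
    rw [LinearMap.range_dualMap_eq_dualAnnihilator_ker, Submodule.mem_dualAnnihilator, dualSet,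
      Set.mem_ofPred_eq, hcode]
    rfl
  calc Nat.card (dualSet v) = Nat.card (LinearMap.range Φ.dualMap) :=
        Nat.card_congr ((dotProductEquiv (ZMod 2) (Fin n)).toEquiv.subtypeEquiv hdual)
    _ ≤ Nat.card F :=
        let e := (Module.Free.chooseBasis (ZMod 2) F).toDualEquiv
        Nat.card_le_card_of_surjective (Φ.dualMap.rangeRestrict ∘ e)
          (Φ.dualMap.surjective_rangeRestrict.comp e.surjective)

theorem range_cw_eq_dualSet [Fintype F] [DecidableEq F] {r : ℕ} (hF : Fintype.card F = 2 ^ r)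
    {v : Fin n → F} (hinj : Function.Injective (cw r v)) : Set.range (cw r v) = dualSet v :=
  Set.eq_of_subset_of_ncard_le (range_cw_subset_dualSet hF v) <| by
    rw [← Nat.card_coe_set_eq, ← Nat.card_coe_set_eq, Nat.card_range_of_injective hinj]
    exact card_dualSet_le v

end Code

theorem doubledInvVec_cast_castAdd {F : Type*} [Field F] {m n : ℕ} (g : Fin m → F)
    (hN : n = m + m) (i : Fin m) :
    doubledInvVec g hN (Fin.cast hN.symm (Fin.castAdd m i)) = (g i)⁻¹ := by
  simp [doubledInvVec]

/-- For every `r ≥ 1`, the map `c_3 : F_q → F_2^q`,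
`a ↦ (tr(a·(b+γ_0)⁻¹), …, tr(a·(b+γ_{q/2−1})⁻¹), tr(a·(b+γ_0)⁻¹), …, tr(a·(b+γ_{q/2−1})⁻¹))`,
where `b ∈ F_q \ Θ(F_q)` and `γ_0 = 0, γ_1, …, γ_{q/2−1}` enumerate the elements of
`Θ(F_q) = {α² + α : α ∈ F_q}`, is an injective `F_2`-linear (additive) map whose image is
exactly the dual code `C_3^⊥`; in particular `C_3^⊥` has exactly `q` elements. -/
theorem c3_injective_additive_range_eq_dual {F : Type*} [Field F] [Fintype F] [DecidableEq F]
    (r : ℕ) (hr : 1 ≤ r) (hF : Fintype.card F = 2 ^ r)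
    (b : F) (hb : ∀ α : F, α ^ 2 + α ≠ b)
    (γ : Fin (2 ^ (r - 1)) → F) (hγinj : Function.Injective γ)
    (hγran : Set.range γ = {β : F | ∃ α : F, β = α ^ 2 + α})
    (hN : 2 ^ r = 2 ^ (r - 1) + 2 ^ (r - 1)) :
    Function.Injective (cw r (doubledInvVec (fun i => b + γ i) hN)) ∧
    (∀ a a' : F, cw r (doubledInvVec (fun i => b + γ i) hN) (a + a')
        = cw r (doubledInvVec (fun i => b + γ i) hN) a
          + cw r (doubledInvVec (fun i => b + γ i) hN) a') ∧
    Set.range (cw r (doubledInvVec (fun i => b + γ i) hN))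
        = dualSet (doubledInvVec (fun i => b + γ i) hN) ∧
    Nat.card (dualSet (doubledInvVec (fun i => b + γ i) hN)) = 2 ^ r := by
  have : CharP F 2 := charP_of_card_eq_prime_pow hF
  have hbγ (i) : b + γ i ≠ 0 := by
    intro h
    obtain ⟨α, hα⟩ : γ i ∈ {β : F | ∃ α : F, β = α ^ 2 + α} :=
      hγran ▸ Set.mem_range_self i
    exact hb α (hα ▸ (CharTwo.add_eq_zero.1 h).symm)
  have hinj : Function.Injective (cw r (doubledInvVec (fun i => b + γ i) hN)) :=
    cw_injective hF fun a ha =>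
      eq_zero_of_forall_trF_mul_inv_eq_zero hr ((add_right_injective b).comp hγinj) hbγ
        (Fintype.card_fin _).ge fun i => by
          simpa [doubledInvVec_cast_castAdd] using ha (Fin.cast hN.symm (Fin.castAdd _ i))
  have hrange := range_cw_eq_dualSet hF hinj
  refine ⟨hinj, cw_add hF _, hrange, ?_⟩
  rw [← hrange, Nat.card_range_of_injective hinj, Nat.card_eq_fintype_card, hF]
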